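/- If (i_n) is a sequence of integers with i_n/√n → 0 and n + i_n even for all n, then the probability p_{n,i_n} that a simple random walk on ℤ starting at 0 is at i_n after n steps satisfies √n · p_{n, i_n} → √(2/π) as n → ∞. -/

import Mathlib

open Finset

/-- The displacement of a single step of the walk: `+1` or `-1`. -/
def step (b : Bool) : ℤ := if b then 1 else -1

/-- The position after the first `m` steps of the walk determined by the
sequence of coin flips `f`. -/
def pos {n : ℕ} (f : Fin n → Bool) (m : ℕ) : ℤ :=
  ∑ k ∈ Finset.univ.filter (fun k : Fin n => (k : ℕ) < m), step (f k)

/-- `walkProb n i` is the probability that a simple random walk on `ℤ`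
starting at `0` is at position `i` after `n` steps. -/
noncomputable def walkProb (n : ℕ) (i : ℤ) : ℝ :=
  ((Finset.univ.filter (fun f : Fin n → Bool => pos f n = i)).card : ℝ) / 2 ^ n

/-!
Counting coin-flip sequences with `a` heads and `b` tails gives
`p_{a+b, a-b} = C(a+b, a) / 2^(a+b)`. Stirling's formula `m! = s_m √(2m) (m/e)^m`, with
`s_m → √π`, splits `√n · C(a+b, a) / 2^(a+b)` (`n = a + b`) into three factors:
`s_n / (s_a s_b) → 1/√π`; `n / √(2ab) → √2`, because `a/n, b/n → 1/2`; and
`((a+b)/2)^(a+b) / (a^a b^b) = exp (-D)` with `D = a log (2a/n) + b log (2b/n)`, which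
`log x ≤ x - 1` squeezes between `0` and `(a-b)²/n = (i/√n)² → 0`.
-/

open Filter Topology Real Stirling
open scoped Nat

lemma pos_self_eq {n : ℕ} (f : Fin n → Bool) :
    pos f n = 2 * (#{k | f k} : ℤ) - n := by
  have hstep : ∀ b, step b = 2 * (if b then 1 else 0) - 1 := by decide
  simp_rw [pos, Fin.is_lt, filter_true, hstep, sum_sub_distrib, ← mul_sum, sum_boole]
  simp

lemma card_filter_card_true_eq_choose (n t : ℕ) :
    #{f : Fin n → Bool | #{k | f k} = t} = n.choose t := by
  rw [← card_fin n, ← card_powersetCard t (univ : Finset (Fin n)), card_fin]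
  refine card_nbij' (fun f => ({k | f k} : Finset _)) (fun s k => k ∈ s) ?_ ?_ ?_ ?_ <;>
    intro x hx <;> simp_all

lemma walkProb_add_sub (a b : ℕ) :
    walkProb (a + b) (a - b) = (a + b).choose a / 2 ^ (a + b) := by
  rw [walkProb, ← card_filter_card_true_eq_choose]
  congr 3
  ext f
  simp only [Finset.mem_filter, Finset.mem_univ, true_and, pos_self_eq]
  push_cast
  omega

lemma factorial_eq_stirlingSeq_mul {n : ℕ} (hn : n ≠ 0) :
    (n ! : ℝ) = stirlingSeq n * (√(2 * n) * (n / exp 1) ^ n) := by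
  rw [stirlingSeq, div_mul_cancel₀]
  have : (0 : ℝ) < n := by positivity
  positivity

lemma stirlingSeq_pos {n : ℕ} (hn : n ≠ 0) : 0 < stirlingSeq n :=
  (sqrt_pos.2 pi_pos).trans_le (sqrt_pi_le_stirlingSeq hn)

lemma sqrt_mul_choose_div_two_pow_eq {a b : ℕ} (ha : a ≠ 0) (hb : b ≠ 0) :
    √(a + b : ℝ) * ((a + b).choose a / 2 ^ (a + b)) =
      stirlingSeq (a + b) / (stirlingSeq a * stirlingSeq b) * ((a + b) / √(2 * a * b)) *
        (((a + b) / 2 : ℝ) ^ (a + b) / (a ^ a * b ^ b)) := by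
  have hab : a + b ≠ 0 := by omega
  have hsa := (stirlingSeq_pos ha).ne'
  have hsb := (stirlingSeq_pos hb).ne'
  have hsab := (stirlingSeq_pos hab).ne'
  have ha' : (0 : ℝ) < a := by positivity
  have hb' : (0 : ℝ) < b := by positivity
  rw [Nat.cast_add_choose, factorial_eq_stirlingSeq_mul hab, factorial_eq_stirlingSeq_mul ha,
    factorial_eq_stirlingSeq_mul hb]
  push_cast
  rw [div_pow, div_pow, div_pow, pow_add (exp 1), sqrt_mul' _ ha'.le, sqrt_mul' _ hb'.le,
    sqrt_mul (by positivity : (0 : ℝ) ≤ 2 * a), sqrt_mul zero_le_two (a + b : ℝ),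
    sqrt_mul zero_le_two (a : ℝ)]
  have hn : √(a + b : ℝ) ^ 2 = a + b := sq_sqrt (by positivity)
  field_simp
  rw [hn, div_pow]
  field_simp

lemma mul_log_two_mul_div_add_nonneg {x y : ℝ} (hx : 0 < x) (hy : 0 < y) :
    0 ≤ x * log (2 * x / (x + y)) + y * log (2 * y / (x + y)) := by
  have key : ∀ z : ℝ, 0 < z → z - (x + y) / 2 ≤ z * log (2 * z / (x + y)) := fun z hz => by
    have := one_sub_inv_le_log_of_pos (by positivity : 0 < 2 * z / (x + y))
    calc z - (x + y) / 2 = z * (1 - (2 * z / (x + y))⁻¹) := by field_simp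
      _ ≤ z * log (2 * z / (x + y)) := by gcongr
  linarith [key x hx, key y hy]

lemma mul_log_two_mul_div_add_le {x y : ℝ} (hx : 0 < x) (hy : 0 < y) :
    x * log (2 * x / (x + y)) + y * log (2 * y / (x + y)) ≤ (x - y) ^ 2 / (x + y) := by
  have key : ∀ z : ℝ, 0 < z → z * log (2 * z / (x + y)) ≤ z * (2 * z / (x + y) - 1) :=
    fun z hz => by gcongr; exact log_le_sub_one_of_pos (by positivity)
  have hsum : x * (2 * x / (x + y) - 1) + y * (2 * y / (x + y) - 1) = (x - y) ^ 2 / (x + y) := by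
    field_simp; ring
  linarith [key x hx, key y hy]

lemma half_add_pow_div_pow_mul_pow_eq_exp {a b : ℕ} (ha : a ≠ 0) (hb : b ≠ 0) :
    ((a + b) / 2 : ℝ) ^ (a + b) / (a ^ a * b ^ b) =
      exp (-(a * log (2 * a / (a + b)) + b * log (2 * b / (a + b)))) := by
  have ha' : (0 : ℝ) < a := by positivity
  have hb' : (0 : ℝ) < b := by positivity
  rw [← exp_log (by positivity : 0 < ((a + b) / 2 : ℝ) ^ (a + b) / (a ^ a * b ^ b))]
  congr 1
  rw [log_div (by positivity) (by positivity), log_mul (by positivity) (by positivity),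
    log_pow, log_pow, log_pow, log_div (by positivity) (by positivity),
    log_div (by positivity) (by positivity), log_div (by positivity) (by positivity),
    log_mul two_ne_zero ha'.ne', log_mul two_ne_zero hb'.ne']
  push_cast
  ring

section
variable {ι : Type*} {l : Filter ι} {a b : ι → ℕ}

lemma tendsto_div_add_of_tendsto_sub_div_sqrt
    (hn : Tendsto (fun j => (a j + b j : ℝ)) l atTop)
    (hab : Tendsto (fun j => ((a j : ℝ) - b j) / √(a j + b j)) l (𝓝 0)) :
    Tendsto (fun j => (a j : ℝ) / (a j + b j)) l (𝓝 (1 / 2)) := by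
  have hinv : Tendsto (fun j => (2 * √(a j + b j : ℝ))⁻¹) l (𝓝 0) :=
    ((tendsto_sqrt_atTop.comp hn).const_mul_atTop two_pos).inv_tendsto_atTop
  have := (hab.mul hinv).const_add (1 / 2)
  rw [mul_zero, add_zero] at this
  refine this.congr' ?_
  filter_upwards [hn.eventually_gt_atTop 0] with j hj
  calc 1 / 2 + (a j - b j) / √(a j + b j : ℝ) * (2 * √(a j + b j : ℝ))⁻¹
      = 1 / 2 + (a j - b j) / (2 * √(a j + b j : ℝ) ^ 2) := by ring
    _ = a j / (a j + b j) := by rw [sq_sqrt hj.le]; field_simp; ring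

lemma tendsto_natCast_atTop_of_tendsto_div {x : ι → ℕ} {y : ι → ℝ} {c : ℝ} (hc : 0 < c)
    (hy : Tendsto y l atTop) (hx : Tendsto (fun j => (x j : ℝ) / y j) l (𝓝 c)) :
    Tendsto x l atTop := by
  refine (tendsto_natCast_atTop_iff (R := ℝ)).1 ((hx.pos_mul_atTop hc hy).congr' ?_)
  filter_upwards [hy.eventually_gt_atTop 0] with j hj
  field_simp

lemma tendsto_add_div_sqrt_two_mul_mul (hn : Tendsto (fun j => (a j + b j : ℝ)) l atTop)
    (ha : Tendsto (fun j => (a j : ℝ) / (a j + b j)) l (𝓝 (1 / 2)))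
    (hb : Tendsto (fun j => (b j : ℝ) / (a j + b j)) l (𝓝 (1 / 2))) :
    Tendsto (fun j => (a j + b j : ℝ) / √(2 * a j * b j)) l (𝓝 √2) := by
  have := ((((ha.mul hb).const_mul 2).sqrt).inv₀ (by norm_num))
  have h2 : (√(2 * (1 / 2 * (1 / 2)) : ℝ))⁻¹ = √2 := by
    rw [← sqrt_inv]; norm_num
  rw [h2] at this
  refine this.congr' ?_
  filter_upwards [hn.eventually_gt_atTop 0] with j hj
  rw [show 2 * (a j / (a j + b j) * (b j / (a j + b j)) : ℝ) = 2 * a j * b j / (a j + b j) ^ 2 by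
    field_simp, sqrt_div' _ (by positivity), sqrt_sq hj.le, inv_div]

lemma tendsto_half_add_pow_div_pow_mul_pow (ha : Tendsto a l atTop) (hb : Tendsto b l atTop)
    (hab : Tendsto (fun j => ((a j : ℝ) - b j) / √(a j + b j)) l (𝓝 0)) :
    Tendsto (fun j => ((a j + b j) / 2 : ℝ) ^ (a j + b j) / (a j ^ a j * b j ^ b j)) l
      (𝓝 1) := by
  have hpos : ∀ᶠ j in l, 0 < a j ∧ 0 < b j :=
    (ha.eventually_gt_atTop 0).and (hb.eventually_gt_atTop 0)
  have hdiv : Tendsto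
      (fun j => (a j * log (2 * a j / (a j + b j)) + b j * log (2 * b j / (a j + b j)) : ℝ)) l
      (𝓝 0) := by
    refine tendsto_of_tendsto_of_tendsto_of_le_of_le' tendsto_const_nhds
      (by simpa using hab.pow 2) ?_ ?_ <;> filter_upwards [hpos] with j ⟨hja, hjb⟩
    · exact mul_log_two_mul_div_add_nonneg (by positivity) (by positivity)
    · rw [div_pow, sq_sqrt (by positivity)]
      exact mul_log_two_mul_div_add_le (by positivity) (by positivity)
  have hexp := (continuous_exp.tendsto _).comp hdiv.neg
  rw [neg_zero, exp_zero] at hexp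
  refine hexp.congr' ?_
  filter_upwards [hpos] with j ⟨hja, hjb⟩
  exact (half_add_pow_div_pow_mul_pow_eq_exp hja.ne' hjb.ne').symm

theorem tendsto_sqrt_mul_choose_div_two_pow (hn : Tendsto (fun j => a j + b j) l atTop)
    (hab : Tendsto (fun j => ((a j : ℝ) - b j) / √(a j + b j)) l (𝓝 0)) :
    Tendsto (fun j => √(a j + b j : ℝ) * ((a j + b j).choose (a j) / 2 ^ (a j + b j))) l
      (𝓝 √(2 / π)) := by
  have hn' : Tendsto (fun j => (a j + b j : ℝ)) l atTop := by
    simpa using (tendsto_natCast_atTop_iff (R := ℝ)).2 hn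
  have ha := tendsto_div_add_of_tendsto_sub_div_sqrt hn' hab
  have hb : Tendsto (fun j => (b j : ℝ) / (a j + b j)) l (𝓝 (1 / 2)) := by
    have := tendsto_div_add_of_tendsto_sub_div_sqrt (a := b) (b := a)
      (by simpa only [add_comm] using hn')
      (by simpa only [add_comm, neg_zero, ← neg_div, neg_sub] using hab.neg)
    simpa only [add_comm] using this
  have ha' := tendsto_natCast_atTop_of_tendsto_div one_half_pos hn' ha
  have hb' := tendsto_natCast_atTop_of_tendsto_div one_half_pos hn' hb
  have hstirling : Tendsto
      (fun j => stirlingSeq (a j + b j) / (stirlingSeq (a j) * stirlingSeq (b j))) l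
      (𝓝 (√π / (√π * √π))) :=
    (tendsto_stirlingSeq_sqrt_pi.comp hn).div ((tendsto_stirlingSeq_sqrt_pi.comp ha').mul
      (tendsto_stirlingSeq_sqrt_pi.comp hb')) (by positivity)
  have hlim := (hstirling.mul (tendsto_add_div_sqrt_two_mul_mul hn' ha hb)).mul
    (tendsto_half_add_pow_div_pow_mul_pow ha' hb' hab)
  have hval : √π / (√π * √π) * √2 * 1 = √(2 / π) := by
    rw [sqrt_div zero_le_two]; field_simp
  rw [hval] at hlim
  refine hlim.congr' ?_
  filter_upwards [ha'.eventually_gt_atTop 0, hb'.eventually_gt_atTop 0] with j hja hjb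
  exact (sqrt_mul_choose_div_two_pow_eq hja.ne' hjb.ne').symm

end

lemma eventually_abs_le_of_tendsto_div_sqrt {x : ℕ → ℝ}
    (hx : Tendsto (fun n => x n / √n) atTop (𝓝 0)) : ∀ᶠ n in atTop, |x n| ≤ n := by
  filter_upwards [(hx.abs.eventually_lt_const (by norm_num : |(0 : ℝ)| < 1)),
    eventually_ge_atTop 1] with n hxn hn
  have hn' : (1 : ℝ) ≤ n := by exact_mod_cast hn
  rw [abs_div, abs_of_nonneg (sqrt_nonneg _), div_lt_one (by positivity)] at hxn
  exact hxn.le.trans (sqrt_le_self_iff.2 (Or.inr hn'))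

theorem walkProb_asymptotic (i : ℕ → ℤ)
    (hsmall : Tendsto (fun n : ℕ => (i n : ℝ) / Real.sqrt n) atTop (nhds 0))
    (hparity : ∀ n : ℕ, Even ((n : ℤ) + i n)) :
    Tendsto (fun n : ℕ => Real.sqrt n * walkProb n (i n)) atTop
      (nhds (Real.sqrt (2 / Real.pi))) := by
  set a : ℕ → ℕ := fun n => ((n + i n) / 2).toNat
  set b : ℕ → ℕ := fun n => ((n - i n) / 2).toNat
  have hsplit : ∀ᶠ n in atTop, a n + b n = n ∧ (a n - b n : ℤ) = i n := by
    filter_upwards [eventually_abs_le_of_tendsto_div_sqrt hsmall] with n hn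
    have hn' : |i n| ≤ n := by exact_mod_cast hn
    obtain ⟨r, hr⟩ := hparity n
    rw [abs_le] at hn'
    simp only [a, b]
    omega
  have hn : Tendsto (fun n => a n + b n) atTop atTop :=
    tendsto_id.congr' (hsplit.mono fun n h => h.1.symm)
  have hab : Tendsto (fun n => ((a n : ℝ) - b n) / √(a n + b n)) atTop (𝓝 0) := by
    refine hsmall.congr' (hsplit.mono fun n ⟨h1, h2⟩ => ?_)
    dsimp only
    rw [← Nat.cast_add, h1, ← h2, Int.cast_sub, Int.cast_natCast, Int.cast_natCast]
  refine (tendsto_sqrt_mul_choose_div_two_pow hn hab).congr' (hsplit.mono fun n ⟨h1, h2⟩ => ?_)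
  have h := walkProb_add_sub (a n) (b n)
  rw [h1, h2] at h
  dsimp only
  rw [h, ← Nat.cast_add, h1]
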